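/- arXiv:2511.02075 — 2 statements merged into one kernel-verified Lean document; each statement's English description precedes it below -/
import Mathlib

section
/- Let ω : ℝ → ℝ² be differentiable and n ∈ ℤ² nonzero with n⊥ = (-n₂, n₁). Suppose n⊥ · ω(0) ≠ 0 and define ι(p) = (n · ω(p)) / ((n₁²+n₂²) (n⊥ · ω(p))) on a neighborhood where the denominator is nonzero. Then ι'(0) = (n₁²+n₂²)⁻¹ · (nᵀ A(0) n⊥) / (n⊥ · ω(0))², where A(p) = ω'(p) ω(p)ᵀ - ω(p) ω'(p)ᵀ. -/
/-!
Writing `ι = c⁻¹ · (n·ω)/(n⊥·ω)` with `c = n₁² + n₂²`, the quotient rule gives the numerator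
`(n·ω')(n⊥·ω) − (n·ω)(n⊥·ω')`, and this is exactly the bilinear form `nᵀ (ω'ωᵀ − ωω'ᵀ) n⊥`.
-/

open Matrix

theorem dotProduct_vecMulVec_sub_vecMulVec_mulVec {R ι : Type*} [CommRing R] [Fintype ι]
    (u v a b : ι → R) :
    u ⬝ᵥ ((vecMulVec a b - vecMulVec b a) *ᵥ v) = (u ⬝ᵥ a) * (b ⬝ᵥ v) - (u ⬝ᵥ b) * (a ⬝ᵥ v) := by
  simp only [sub_mulVec, vecMulVec_mulVec, dotProduct_sub, MulOpposite.smul_eq_mul_unop,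
    MulOpposite.unop_op, dotProduct_smul]

section

variable {𝕜 ι : Type*} [NontriviallyNormedField 𝕜] [Fintype ι]

theorem HasDerivAt.const_dotProduct {ω : 𝕜 → ι → 𝕜} {ω' : ι → 𝕜} {x : 𝕜}
    (hω : HasDerivAt ω ω' x) (u : ι → 𝕜) :
    HasDerivAt (fun p => u ⬝ᵥ ω p) (u ⬝ᵥ ω') x :=
  HasDerivAt.fun_sum fun i _ => (hasDerivAt_pi.mp hω i).const_mul (u i)

theorem HasDerivAt.dotProduct_div_dotProduct {ω : 𝕜 → ι → 𝕜} {ω' : ι → 𝕜} {x : 𝕜}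
    (hω : HasDerivAt ω ω' x) (u v : ι → 𝕜) (hv : v ⬝ᵥ ω x ≠ 0) :
    HasDerivAt (fun p => (u ⬝ᵥ ω p) / (v ⬝ᵥ ω p))
      (u ⬝ᵥ ((vecMulVec ω' (ω x) - vecMulVec (ω x) ω') *ᵥ v) / (v ⬝ᵥ ω x) ^ 2) x := by
  rw [dotProduct_vecMulVec_sub_vecMulVec_mulVec, dotProduct_comm (ω x) v, dotProduct_comm ω' v]
  exact (hω.const_dotProduct u).div (hω.const_dotProduct v) hv

end

theorem stmt_3_general (ω : ℝ → Fin 2 → ℝ) (hω : Differentiable ℝ ω)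
    (n₁ n₂ : ℤ)
    (hden : dotProduct ![-(n₂:ℝ), (n₁:ℝ)] (ω 0) ≠ 0) :
    letI nv : Fin 2 → ℝ := ![(n₁:ℝ), (n₂:ℝ)]
    letI np : Fin 2 → ℝ := ![-(n₂:ℝ), (n₁:ℝ)]
    letI A : ℝ → Matrix (Fin 2) (Fin 2) ℝ := fun p =>
      Matrix.vecMulVec (deriv ω p) (ω p) - Matrix.vecMulVec (ω p) (deriv ω p)
    letI ι : ℝ → ℝ := fun p =>
      dotProduct nv (ω p) / (((n₁:ℝ)^2 + (n₂:ℝ)^2) * dotProduct np (ω p))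
    deriv ι 0 = ((n₁:ℝ)^2 + (n₂:ℝ)^2)⁻¹ *
      (dotProduct nv ((A 0).mulVec np)) / (dotProduct np (ω 0))^2 := by
  set nv : Fin 2 → ℝ := ![(n₁:ℝ), (n₂:ℝ)]
  set np : Fin 2 → ℝ := ![-(n₂:ℝ), (n₁:ℝ)]
  have hι : (fun p => nv ⬝ᵥ ω p / (((n₁:ℝ)^2 + (n₂:ℝ)^2) * np ⬝ᵥ ω p))
      = fun p => ((n₁:ℝ)^2 + (n₂:ℝ)^2)⁻¹ * (nv ⬝ᵥ ω p / np ⬝ᵥ ω p) := by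
    funext p
    rw [div_eq_mul_inv, mul_inv]
    ring
  rw [hι, mul_div_assoc]
  exact (((hω 0).hasDerivAt.dotProduct_div_dotProduct nv np hden).const_mul _).deriv

/-- Derivative of the rotation number `ι(p) = (n·ω(p)) / ((n₁²+n₂²)(n⊥·ω(p)))`
at `p = 0` equals `(n₁²+n₂²)⁻¹ (nᵀ A(0) n⊥) / (n⊥·ω(0))²`, where
`A(p) = ω'(p)ω(p)ᵀ - ω(p)ω'(p)ᵀ`. -/
theorem stmt_3 (ω : ℝ → Fin 2 → ℝ) (hω : Differentiable ℝ ω)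
    (n₁ n₂ : ℤ) (hn : (n₁, n₂) ≠ (0, 0))
    (hden : dotProduct ![-(n₂:ℝ), (n₁:ℝ)] (ω 0) ≠ 0) :
    letI nv : Fin 2 → ℝ := ![(n₁:ℝ), (n₂:ℝ)]
    letI np : Fin 2 → ℝ := ![-(n₂:ℝ), (n₁:ℝ)]
    letI A : ℝ → Matrix (Fin 2) (Fin 2) ℝ := fun p =>
      Matrix.vecMulVec (deriv ω p) (ω p) - Matrix.vecMulVec (ω p) (deriv ω p)
    letI ι : ℝ → ℝ := fun p =>
      dotProduct nv (ω p) / (((n₁:ℝ)^2 + (n₂:ℝ)^2) * dotProduct np (ω p))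
    deriv ι 0 = ((n₁:ℝ)^2 + (n₂:ℝ)^2)⁻¹ *
      (dotProduct nv ((A 0).mulVec np)) / (dotProduct np (ω 0))^2 :=
  stmt_3_general ω hω n₁ n₂ hden
end

section
/- (Section-independence of the nontwist condition) Let ω : ℝ → ℝ² be twice differentiable with ω(0) having nonzero components and irrational component ratio. For nonzero n ∈ ℤ², define ι_n(p) = (n·ω(p))/((n₁²+n₂²)(n⊥·ω(p))). If for some nonzero n one has ι_n'(0) = 0 and ι_n''(0) ≠ 0, then for every nonzero ñ ∈ ℤ², ι_ñ'(0) = 0 and ι_ñ''(0) ≠ 0. -/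
/-!
Writing `N = n·ω` and `D = n⊥·ω`, one has `N'D - ND' = (n₁² + n₂²) W` with the Wronskian
`W = ω₁'ω₂ - ω₁ω₂'`, so `ι_n' = W / D²`. Irrationality of `ω₁(0)/ω₂(0)` makes `D(0) ≠ 0` for
every `n ≠ 0`, hence `ι_n'(0) = 0 ↔ W(0) = 0`, and then `ι_n''(0) = W'(0) / D(0)²`. Both
conditions are therefore conditions on `W` alone.
-/

open Filter Topology

/-- The rotation number `ι_n(p) = (n·ω(p)) / ((n₁²+n₂²)(n⊥·ω(p)))` associated to
the section with winding numbers `n = (n₁,n₂)`. -/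
noncomputable def iotaRot (ω : ℝ → Fin 2 → ℝ) (n₁ n₂ : ℤ) (p : ℝ) : ℝ :=
  ((n₁:ℝ) * ω p 0 + (n₂:ℝ) * ω p 1) /
    (((n₁:ℝ)^2 + (n₂:ℝ)^2) * (-(n₂:ℝ) * ω p 0 + (n₁:ℝ) * ω p 1))

theorem HasDerivAt.div_of_eq_zero {u w : ℝ → ℝ} {u' w' x : ℝ} (hu : HasDerivAt u u' x)
    (hw : HasDerivAt w w' x) (hux : u x = 0) (hwx : w x ≠ 0) :
    HasDerivAt (fun y => u y / w y) (u' / w x) x := by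
  refine (hu.div hw hwx).congr_deriv ?_
  rw [hux, zero_mul, sub_zero, sq, mul_div_mul_right _ _ hwx]

theorem Irrational.neg_intCast_mul_add_intCast_mul_ne_zero {a b : ℝ} (hb : b ≠ 0)
    (hab : Irrational (a / b)) {m n : ℤ} (hmn : (m, n) ≠ (0, 0)) :
    -(n:ℝ) * a + m * b ≠ 0 := by
  intro h
  by_cases hn : n = 0
  · have hm : m ≠ 0 := fun hm => hmn (by simp [hm, hn])
    simp only [hn, Int.cast_zero, neg_zero, zero_mul, zero_add, mul_eq_zero, Int.cast_eq_zero]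
      at h
    exact h.elim hm hb
  · apply hab.ne_rational m n
    field_simp
    linarith

theorem intCast_sq_add_intCast_sq_ne_zero {m n : ℤ} (hmn : (m, n) ≠ (0, 0)) :
    (m:ℝ)^2 + (n:ℝ)^2 ≠ 0 := by
  have : m ≠ 0 ∨ n ≠ 0 := by
    by_contra! h
    exact hmn (by simp [h.1, h.2])
  rcases this with h | h
  · have : (0:ℝ) < (m:ℝ)^2 := by positivity
    positivity
  · have : (0:ℝ) < (n:ℝ)^2 := by positivity
    positivity

namespace iotaRot

variable (ω : ℝ → Fin 2 → ℝ)

/-- The component `n⊥·ω` of `ω` along `n⊥ = (-n₂, n₁)`. -/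
noncomputable def perpDot (n₁ n₂ : ℤ) (p : ℝ) : ℝ :=
  -(n₂:ℝ) * ω p 0 + (n₁:ℝ) * ω p 1

/-- The off-diagonal entry of the antisymmetric matrix `ω'ωᵀ - ωω'ᵀ`. -/
noncomputable def wronskian (p : ℝ) : ℝ :=
  deriv ω p 0 * ω p 1 - ω p 0 * deriv ω p 1

variable {ω}

theorem perpDot_ne_zero (hω1 : ω 0 1 ≠ 0) (hirr : Irrational (ω 0 0 / ω 0 1))
    {n₁ n₂ : ℤ} (hn : (n₁, n₂) ≠ (0, 0)) : perpDot ω n₁ n₂ 0 ≠ 0 :=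
  hirr.neg_intCast_mul_add_intCast_mul_ne_zero hω1 hn

theorem hasDerivAt_perpDot {p : ℝ} (hω : DifferentiableAt ℝ ω p) (n₁ n₂ : ℤ) :
    HasDerivAt (perpDot ω n₁ n₂) (-(n₂:ℝ) * deriv ω p 0 + (n₁:ℝ) * deriv ω p 1) p :=
  have hω' := hasDerivAt_pi.1 hω.hasDerivAt
  ((hω' 0).const_mul _).add ((hω' 1).const_mul _)

theorem differentiableAt_wronskian {p : ℝ} (hω : DifferentiableAt ℝ ω p)
    (hω' : DifferentiableAt ℝ (deriv ω) p) : DifferentiableAt ℝ (wronskian ω) p := by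
  have hω := hasDerivAt_pi.1 hω.hasDerivAt
  have hω' := hasDerivAt_pi.1 hω'.hasDerivAt
  exact (((hω' 0).mul (hω 1)).sub ((hω 0).mul (hω' 1))).differentiableAt

theorem hasDerivAt {p : ℝ} (hω : DifferentiableAt ℝ ω p) {n₁ n₂ : ℤ} (hn : (n₁, n₂) ≠ (0, 0))
    (hD : perpDot ω n₁ n₂ p ≠ 0) :
    HasDerivAt (iotaRot ω n₁ n₂) (wronskian ω p / perpDot ω n₁ n₂ p ^ 2) p := by
  have hc := intCast_sq_add_intCast_sq_ne_zero hn
  have hω' := hasDerivAt_pi.1 hω.hasDerivAt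
  have hN : HasDerivAt (fun q => (n₁:ℝ) * ω q 0 + (n₂:ℝ) * ω q 1)
      ((n₁:ℝ) * deriv ω p 0 + (n₂:ℝ) * deriv ω p 1) p :=
    ((hω' 0).const_mul _).add ((hω' 1).const_mul _)
  refine (hN.div ((hasDerivAt_perpDot hω n₁ n₂).const_mul _) (mul_ne_zero hc hD)).congr_deriv ?_
  rw [div_eq_div_iff (pow_ne_zero 2 (mul_ne_zero hc hD)) (pow_ne_zero 2 hD)]
  simp only [wronskian, perpDot]
  ring

theorem deriv_eq {p : ℝ} (hω : DifferentiableAt ℝ ω p) {n₁ n₂ : ℤ} (hn : (n₁, n₂) ≠ (0, 0))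
    (hD : perpDot ω n₁ n₂ p ≠ 0) :
    deriv (iotaRot ω n₁ n₂) p = wronskian ω p / perpDot ω n₁ n₂ p ^ 2 :=
  (hasDerivAt hω hn hD).deriv

theorem deriv_deriv_eq {p : ℝ} (hω : Differentiable ℝ ω) (hω' : DifferentiableAt ℝ (deriv ω) p)
    {n₁ n₂ : ℤ} (hn : (n₁, n₂) ≠ (0, 0)) (hD : perpDot ω n₁ n₂ p ≠ 0)
    (hW : wronskian ω p = 0) :
    deriv (deriv (iotaRot ω n₁ n₂)) p = deriv (wronskian ω) p / perpDot ω n₁ n₂ p ^ 2 := by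
  have hD_near : ∀ᶠ q in 𝓝 p, perpDot ω n₁ n₂ q ≠ 0 :=
    (hasDerivAt_perpDot (hω p) n₁ n₂).continuousAt.eventually_ne hD
  have hderiv : deriv (iotaRot ω n₁ n₂) =ᶠ[𝓝 p]
      fun q => wronskian ω q / perpDot ω n₁ n₂ q ^ 2 :=
    hD_near.mono fun q hq => deriv_eq (hω q) hn hq
  rw [hderiv.deriv_eq]
  exact ((differentiableAt_wronskian (hω p) hω').hasDerivAt.div_of_eq_zero
    ((hasDerivAt_perpDot (hω p) n₁ n₂).pow 2) hW (pow_ne_zero 2 hD)).deriv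

theorem deriv_eq_zero_iff {p : ℝ} (hω : DifferentiableAt ℝ ω p) {n₁ n₂ : ℤ}
    (hn : (n₁, n₂) ≠ (0, 0)) (hD : perpDot ω n₁ n₂ p ≠ 0) :
    deriv (iotaRot ω n₁ n₂) p = 0 ↔ wronskian ω p = 0 := by
  rw [deriv_eq hω hn hD, div_eq_zero_iff, or_iff_left (pow_ne_zero 2 hD)]

theorem deriv_deriv_ne_zero_iff {p : ℝ} (hω : Differentiable ℝ ω)
    (hω' : DifferentiableAt ℝ (deriv ω) p) {n₁ n₂ : ℤ} (hn : (n₁, n₂) ≠ (0, 0))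
    (hD : perpDot ω n₁ n₂ p ≠ 0) (hW : wronskian ω p = 0) :
    deriv (deriv (iotaRot ω n₁ n₂)) p ≠ 0 ↔ deriv (wronskian ω) p ≠ 0 := by
  rw [deriv_deriv_eq hω hω' hn hD hW, div_ne_zero_iff, and_iff_left (pow_ne_zero 2 hD)]

end iotaRot

open iotaRot in
theorem stmt_7_general (ω : ℝ → Fin 2 → ℝ)
    (hω : Differentiable ℝ ω) (hω' : Differentiable ℝ (deriv ω))
    (h2 : ω 0 1 ≠ 0) (hirr : Irrational (ω 0 0 / ω 0 1))
    (h : ∃ n₁ n₂ : ℤ, (n₁, n₂) ≠ (0, 0) ∧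
      deriv (iotaRot ω n₁ n₂) 0 = 0 ∧ deriv (deriv (iotaRot ω n₁ n₂)) 0 ≠ 0) :
    ∀ m₁ m₂ : ℤ, (m₁, m₂) ≠ (0, 0) →
      deriv (iotaRot ω m₁ m₂) 0 = 0 ∧ deriv (deriv (iotaRot ω m₁ m₂)) 0 ≠ 0 := by
  obtain ⟨n₁, n₂, hn, hd1, hd2⟩ := h
  have hDn := perpDot_ne_zero h2 hirr hn
  have hW : wronskian ω 0 = 0 := (deriv_eq_zero_iff (hω 0) hn hDn).1 hd1
  have hW' : deriv (wronskian ω) 0 ≠ 0 := (deriv_deriv_ne_zero_iff hω (hω' 0) hn hDn hW).1 hd2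
  intro m₁ m₂ hm
  have hDm := perpDot_ne_zero h2 hirr hm
  exact ⟨(deriv_eq_zero_iff (hω 0) hm hDm).2 hW,
    (deriv_deriv_ne_zero_iff hω (hω' 0) hm hDm hW).2 hW'⟩

/-- Section-independence of the nontwist condition: if `ι_n'(0) = 0` and
`ι_n''(0) ≠ 0` for some nonzero `n ∈ ℤ²`, then the same holds for every
nonzero `ñ ∈ ℤ²`. -/
theorem stmt_7 (ω : ℝ → Fin 2 → ℝ)
    (hω : Differentiable ℝ ω) (hω' : Differentiable ℝ (deriv ω))
    (h1 : ω 0 0 ≠ 0) (h2 : ω 0 1 ≠ 0) (hirr : Irrational (ω 0 0 / ω 0 1))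
    (h : ∃ n₁ n₂ : ℤ, (n₁, n₂) ≠ (0, 0) ∧
      deriv (iotaRot ω n₁ n₂) 0 = 0 ∧ deriv (deriv (iotaRot ω n₁ n₂)) 0 ≠ 0) :
    ∀ m₁ m₂ : ℤ, (m₁, m₂) ≠ (0, 0) →
      deriv (iotaRot ω m₁ m₂) 0 = 0 ∧ deriv (deriv (iotaRot ω m₁ m₂)) 0 ≠ 0 :=
  stmt_7_general ω hω hω' h2 hirr h
end
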